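/- Under the same hypotheses as the unconditional L² stability theorem — H a real Hilbert space, A : H → H continuous linear self-adjoint with ⟨Au, u⟩ ≥ c₀‖u‖² (c₀ > 0), N : H → H arbitrary, γ > 0, k > 0, ‖Fₙ‖ ≤ M, and sequences u : ℕ → H, q : ℕ → ℝ satisfying for all n ≥ 1 the scheme (3u_{n+1} − 4u_n + u_{n−1})/(2k) + A u_{n+1} + q_{n+1} · N(2u_n − u_{n−1}) = F_{n+1} and (3q_{n+1} − 4q_n + q_{n−1})/(2k) + γ q_{n+1} − ⟨N(2u_n − u_{n−1}), u_{n+1}⟩ = γ — there exists R₀ > 0 depending only on c₀, γ, M (independent of k and of the sequences) such that limsup_{n→∞} (‖(u_{n+1}, u_n)‖_G² + ‖(q_{n+1}, q_n)‖_G²) ≤ R₀². That is, the scheme possesses an absorbing ball of radius R₀ independent of the time step. -/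

import Mathlib

/-!
Testing the `u`-equation with `u (n+1)` and the `q`-equation with `q (n+1)` makes the
nonlinear terms cancel, and the BDF2 identity
`⟪3a - 4b + c, a⟫ = 2 (‖(a,b)‖²_G - ‖(b,c)‖²_G) + ‖a - 2b + c‖² / 2`
turns the scheme into the energy inequality
`E (n+1) + k α (‖u (n+2)‖² + q (n+2)²) ≤ E n + k β`, with `α = min c₀ γ / 2` and
`β = M² / (2 c₀) + γ / 2`. As `E n` is at most three times the dissipation at two consecutive
times, two steps give the contraction `(1 + k α / 3) E (n+2) ≤ E n + 2 k β`, which drives `E`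
into the ball of squared radius `6 β / α`; the time step `k` cancels from this radius.
-/

open scoped RealInnerProductSpace

/-- The G-norm squared of a pair `(u, v)` in a real inner product space,
associated to the matrix `G = (1/4)[[5,−2],[−2,1]]`. -/
noncomputable def gnormSq {H : Type*} [NormedAddCommGroup H] [InnerProductSpace ℝ H]
    (u v : H) : ℝ :=
  (1/4) * (5 * ‖u‖^2 - 4 * ⟪u, v⟫ + ‖v‖^2)

open Filter

theorem mul_le_half_mul_sq_add_sq_div (x y : ℝ) {ε : ℝ} (hε : 0 < ε) :
    x * y ≤ ε / 2 * y ^ 2 + x ^ 2 / (2 * ε) := by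
  have h : ε / 2 * y ^ 2 + x ^ 2 / (2 * ε) - x * y = (ε * y - x) ^ 2 / (2 * ε) := by
    field_simp; ring
  linarith [div_nonneg (sq_nonneg (ε * y - x)) (by positivity : (0:ℝ) ≤ 2 * ε)]

section

variable {H : Type*} [NormedAddCommGroup H] [InnerProductSpace ℝ H]

theorem gnormSq_eq_norm_sq_add (u v : H) : gnormSq u v = (‖u‖ ^ 2 + ‖(2:ℝ) • u - v‖ ^ 2) / 4 := by
  rw [gnormSq, norm_sub_sq_real, norm_smul, inner_smul_left]
  norm_num
  ring

theorem gnormSq_nonneg (u v : H) : 0 ≤ gnormSq u v := by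
  rw [gnormSq_eq_norm_sq_add]; positivity

theorem gnormSq_le (u v : H) : gnormSq u v ≤ 3 * (‖u‖ ^ 2 + ‖v‖ ^ 2) := by
  have h := norm_sub_le ((2:ℝ) • u) v
  rw [norm_smul, Real.norm_two] at h
  rw [gnormSq_eq_norm_sq_add]
  nlinarith [norm_nonneg ((2:ℝ) • u - v), sq_nonneg (2 * ‖u‖ - ‖v‖)]

theorem gnormSq_real (p r : ℝ) : gnormSq p r = (5 * p ^ 2 - 4 * p * r + r ^ 2) / 4 := by
  rw [gnormSq, Real.inner_apply, Real.norm_eq_abs, Real.norm_eq_abs, sq_abs, sq_abs]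
  ring

theorem inner_bdf2_self (a b c : H) :
    ⟪(3:ℝ) • a - (4:ℝ) • b + c, a⟫
      = 2 * (gnormSq a b - gnormSq b c) + ‖a - (2:ℝ) • b + c‖ ^ 2 / 2 := by
  simp only [gnormSq, ← real_inner_self_eq_norm_sq, inner_add_left, inner_sub_left,
    inner_add_right, inner_sub_right, real_inner_smul_left, real_inner_smul_right,
    real_inner_comm a b, real_inner_comm a c, real_inner_comm b c]
  ring

theorem sav_bdf2_energy_identity (A : H → H) {k γ p r s : ℝ} (hk : k ≠ 0) {a b c w f : H}
    (hu : (2 * k)⁻¹ • ((3:ℝ) • a - (4:ℝ) • b + c) + A a + p • w = f)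
    (hq : (3 * p - 4 * r + s) / (2 * k) + γ * p - ⟪w, a⟫ = γ) :
    ⟪(3:ℝ) • a - (4:ℝ) • b + c, a⟫ + (3 * p - 4 * r + s) * p
      + 2 * k * (⟪A a, a⟫ + γ * p ^ 2) = 2 * k * (⟪f, a⟫ + γ * p) := by
  have hua := congrArg (⟪·, a⟫) hu
  rw [inner_add_left, inner_add_left, real_inner_smul_left, real_inner_smul_left] at hua
  linear_combination (norm := skip) (2 * k) * hua + (2 * k * p) * hq
  field_simp
  ring

theorem sav_bdf2_energy_step (A : H → H) {c₀ γ M k p r s : ℝ} (hc₀ : 0 < c₀) (hγ : 0 ≤ γ)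
    (hk : 0 < k) (hA : ∀ x, c₀ * ‖x‖ ^ 2 ≤ ⟪A x, x⟫) {a b c w f : H} (hf : ‖f‖ ≤ M)
    (hu : (2 * k)⁻¹ • ((3:ℝ) • a - (4:ℝ) • b + c) + A a + p • w = f)
    (hq : (3 * p - 4 * r + s) / (2 * k) + γ * p - ⟪w, a⟫ = γ) :
    gnormSq a b + gnormSq p r + k * (c₀ / 2 * ‖a‖ ^ 2 + γ / 2 * p ^ 2)
      ≤ gnormSq b c + gnormSq r s + k * (M ^ 2 / (2 * c₀) + γ / 2) := by
  have hbal := sav_bdf2_energy_identity A hk.ne' hu hq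
  have hq_bdf2 : (3 * p - 4 * r + s) * p
      = 2 * (gnormSq p r - gnormSq r s) + (p - 2 * r + s) ^ 2 / 2 := by
    rw [gnormSq_real, gnormSq_real]; ring
  rw [inner_bdf2_self, hq_bdf2] at hbal
  have hforce : ⟪f, a⟫ ≤ c₀ / 2 * ‖a‖ ^ 2 + M ^ 2 / (2 * c₀) :=
    calc ⟪f, a⟫ ≤ ‖f‖ * ‖a‖ := real_inner_le_norm f a
      _ ≤ M * ‖a‖ := by gcongr
      _ ≤ _ := mul_le_half_mul_sq_add_sq_div M ‖a‖ hc₀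
  have hsource : γ * p ≤ γ / 2 * p ^ 2 + γ / 2 := by
    linarith [mul_nonneg hγ (sq_nonneg (p - 1))]
  have hrate : ⟪f, a⟫ + γ * p - ⟪A a, a⟫ - γ * p ^ 2
      ≤ M ^ 2 / (2 * c₀) + γ / 2 - (c₀ / 2 * ‖a‖ ^ 2 + γ / 2 * p ^ 2) := by
    linarith [hA a]
  linarith [mul_le_mul_of_nonneg_left hrate hk.le, sq_nonneg ‖a - (2:ℝ) • b + c‖,
    sq_nonneg (p - 2 * r + s)]

end

theorem le_pow_div_two_mul_max_of_two_step {y : ℕ → ℝ} {ρ : ℝ} (hρ : 0 ≤ ρ)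
    (h : ∀ n, y (n + 2) ≤ ρ * y n) (n : ℕ) : y n ≤ ρ ^ (n / 2) * max (y 0) (y 1) := by
  induction n using Nat.twoStepInduction with
  | zero => simp
  | one => simp
  | more m ih _ =>
    calc y (m + 2) ≤ ρ * (ρ ^ (m / 2) * max (y 0) (y 1)) := (h m).trans (by gcongr)
      _ = ρ ^ ((m + 2) / 2) * max (y 0) (y 1) := by
        rw [Nat.add_div_right m two_pos]; ring

theorem limsup_le_of_two_step_contraction {x : ℕ → ℝ} {ρ C : ℝ} (hρ₀ : 0 ≤ ρ) (hρ₁ : ρ < 1)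
    (hx : BddBelow (Set.range x)) (h : ∀ n, x (n + 2) - C ≤ ρ * (x n - C)) :
    limsup x atTop ≤ C := by
  set B := max (x 0 - C) (x 1 - C)
  have hbound (n : ℕ) : x n ≤ C + ρ ^ (n / 2) * B := by
    linarith [le_pow_div_two_mul_max_of_two_step (y := fun n => x n - C) hρ₀ h n]
  have hlim : Tendsto (fun n : ℕ => C + ρ ^ (n / 2) * B) atTop (nhds C) := by
    have hpow := (tendsto_pow_atTop_nhds_zero_of_lt_one hρ₀ hρ₁).comp
      (Nat.tendsto_div_const_atTop two_ne_zero)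
    simpa using (hpow.mul_const B).const_add C
  calc limsup x atTop ≤ limsup (fun n : ℕ => C + ρ ^ (n / 2) * B) atTop :=
        limsup_le_limsup (Eventually.of_forall hbound)
          hx.isBoundedUnder_of_range.isCoboundedUnder_le hlim.isBoundedUnder_le
    _ = C := hlim.limsup_eq

theorem limsup_le_of_energy_dissipation {E D : ℕ → ℝ} {L κ b : ℝ} (hL : 0 < L) (hκ : 0 < κ)
    (hE : BddBelow (Set.range E)) (hED : ∀ n, E n ≤ L * (D (n + 1) + D n))
    (hstep : ∀ n, E (n + 1) + κ * D (n + 2) ≤ E n + b) :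
    limsup E atTop ≤ 2 * L * b / κ := by
  have htwo (n : ℕ) : (1 + κ / L) * E (n + 2) ≤ E n + 2 * b := by
    have := mul_le_mul_of_nonneg_left (hED (n + 2)) (by positivity : 0 ≤ κ / L)
    rw [← mul_assoc, div_mul_cancel₀ κ hL.ne'] at this
    linarith [hstep n, hstep (n + 1)]
  refine limsup_le_of_two_step_contraction (ρ := (1 + κ / L)⁻¹) (by positivity)
    (inv_lt_one_of_one_lt₀ (by linarith [div_pos hκ hL])) hE fun n => ?_
  rw [inv_mul_eq_div, le_div_iff₀ (by positivity)]
  have : (1 + κ / L) * (2 * L * b / κ) = 2 * L * b / κ + 2 * b := by field_simp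
  linarith [htwo n]

theorem stmt_4_general {H : Type*} [NormedAddCommGroup H] [InnerProductSpace ℝ H]
    (c₀ γ M : ℝ) (hc₀ : 0 < c₀) (hγ : 0 < γ) :
    ∃ R₀ > (0:ℝ),
      ∀ (k : ℝ), 0 < k →
      ∀ (A : H →L[ℝ] H),
        (∀ x y : H, ⟪A x, y⟫ = ⟪x, A y⟫) →
        (∀ x : H, c₀ * ‖x‖^2 ≤ ⟪A x, x⟫) →
      ∀ (N : H → H) (F : ℕ → H), (∀ n, ‖F n‖ ≤ M) →
      ∀ (u : ℕ → H) (q : ℕ → ℝ),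
        (∀ n, 1 ≤ n →
          (2*k)⁻¹ • ((3:ℝ) • u (n+1) - (4:ℝ) • u n + u (n-1)) + A (u (n+1))
            + q (n+1) • N ((2:ℝ) • u n - u (n-1)) = F (n+1)) →
        (∀ n, 1 ≤ n →
          (3 * q (n+1) - 4 * q n + q (n-1)) / (2*k) + γ * q (n+1)
            - ⟪N ((2:ℝ) • u n - u (n-1)), u (n+1)⟫ = γ) →
        Filter.limsup (fun n => gnormSq (u (n+1)) (u n) + gnormSq (q (n+1)) (q n))
          Filter.atTop ≤ R₀^2 := by
  obtain ⟨α, hα, hαc, hαγ⟩ : ∃ α, 0 < α ∧ α ≤ c₀ / 2 ∧ α ≤ γ / 2 :=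
    ⟨min c₀ γ / 2, by positivity, by linarith [min_le_left c₀ γ], by linarith [min_le_right c₀ γ]⟩
  set β := M ^ 2 / (2 * c₀) + γ / 2 with hβ
  refine ⟨√(6 * β / α), by positivity, fun k hk A _ hA N F hF u q hu hq => ?_⟩
  rw [Real.sq_sqrt (by positivity), show (6:ℝ) = 2 * 3 by norm_num,
    ← mul_div_mul_left _ _ hk.ne', mul_left_comm]
  refine limsup_le_of_energy_dissipation (D := fun n => ‖u n‖ ^ 2 + q n ^ 2) three_pos
    (by positivity) ⟨0, Set.forall_mem_range.2 fun n => add_nonneg (gnormSq_nonneg _ _)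
      (gnormSq_nonneg _ _)⟩ (fun n => ?_) (fun n => ?_)
  · have hq_le := gnormSq_le (q (n + 1)) (q n)
    simp only [Real.norm_eq_abs, sq_abs] at hq_le
    linarith [gnormSq_le (u (n + 1)) (u n)]
  · have hu' := hu (n + 1) le_add_self
    have hq' := hq (n + 1) le_add_self
    simp only [Nat.add_sub_cancel, Nat.add_assoc, Nat.reduceAdd] at hu' hq'
    have hstep := sav_bdf2_energy_step A hc₀ hγ.le hk hA (hF (n + 2)) hu' hq'
    rw [← hβ] at hstep
    have hdiss : α * (‖u (n + 2)‖ ^ 2 + q (n + 2) ^ 2)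
        ≤ c₀ / 2 * ‖u (n + 2)‖ ^ 2 + γ / 2 * q (n + 2) ^ 2 := by
      linarith [mul_le_mul_of_nonneg_right hαc (sq_nonneg ‖u (n + 2)‖),
        mul_le_mul_of_nonneg_right hαγ (sq_nonneg (q (n + 2)))]
    linarith [mul_le_mul_of_nonneg_left hdiss hk.le]

/-- Absorbing-ball property of the mean-reverting SAV-BDF2 scheme: the radius `R₀`
depends only on `c₀`, `γ`, `M`, and not on the time step `k` or the data. -/
theorem stmt_4 {H : Type*} [NormedAddCommGroup H] [InnerProductSpace ℝ H]
    (c₀ γ M : ℝ) (hc₀ : 0 < c₀) (hγ : 0 < γ) (hM : 0 ≤ M) :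
    ∃ R₀ > (0:ℝ),
      ∀ (k : ℝ), 0 < k →
      ∀ (A : H →L[ℝ] H),
        (∀ x y : H, ⟪A x, y⟫ = ⟪x, A y⟫) →
        (∀ x : H, c₀ * ‖x‖^2 ≤ ⟪A x, x⟫) →
      ∀ (N : H → H) (F : ℕ → H), (∀ n, ‖F n‖ ≤ M) →
      ∀ (u : ℕ → H) (q : ℕ → ℝ),
        (∀ n, 1 ≤ n →
          (2*k)⁻¹ • ((3:ℝ) • u (n+1) - (4:ℝ) • u n + u (n-1)) + A (u (n+1))
            + q (n+1) • N ((2:ℝ) • u n - u (n-1)) = F (n+1)) →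
        (∀ n, 1 ≤ n →
          (3 * q (n+1) - 4 * q n + q (n-1)) / (2*k) + γ * q (n+1)
            - ⟪N ((2:ℝ) • u n - u (n-1)), u (n+1)⟫ = γ) →
        Filter.limsup (fun n => gnormSq (u (n+1)) (u n) + gnormSq (q (n+1)) (q n))
          Filter.atTop ≤ R₀^2 :=
  stmt_4_general c₀ γ M hc₀ hγ
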